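/- Let n, j, k be positive integers with j < k ≤ n/2 (so both formats are feasible). Define f1(p) = ((2j/n)p + 1 − 2j/n)·((2(k−j)/(n−j))p + 1 − 2(k−j)/(n−j)) and f2(p) = (2k/n)p + 1 − 2k/n. Then f1(1/2) = f2(1/2), f1(1) = f2(1), f1 − f2 is strictly convex, and consequently f1(p) < f2(p) for all 1/2 < p < 1. -/
import Mathlib

theorem stmt_5 (n j k : ℕ) (hj : 0 < j) (hjk : j < k) (hk : 2 * k ≤ n) :
    (fun p : ℝ => ((2*j/n) * p + 1 - 2*j/n) * ((2*(k-j : ℕ)/((n:ℝ)-j)) * p + 1 - 2*(k-j : ℕ)/((n:ℝ)-j)))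
        (1/2) = (fun p : ℝ => (2*k/n) * p + 1 - 2*k/n) (1/2) ∧
    (fun p : ℝ => ((2*j/n) * p + 1 - 2*j/n) * ((2*(k-j : ℕ)/((n:ℝ)-j)) * p + 1 - 2*(k-j : ℕ)/((n:ℝ)-j)))
        1 = (fun p : ℝ => (2*k/n) * p + 1 - 2*k/n) 1 ∧
    StrictConvexOn ℝ Set.univ (fun p : ℝ =>
      ((2*j/n) * p + 1 - 2*j/n) * ((2*(k-j : ℕ)/((n:ℝ)-j)) * p + 1 - 2*(k-j : ℕ)/((n:ℝ)-j))
        - ((2*k/n) * p + 1 - 2*k/n)) ∧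
    ∀ p : ℝ, 1/2 < p → p < 1 →
      ((2*j/n) * p + 1 - 2*j/n) * ((2*(k-j : ℕ)/((n:ℝ)-j)) * p + 1 - 2*(k-j : ℕ)/((n:ℝ)-j))
        < (2*k/n) * p + 1 - 2*k/n := by
  have hcast : ((k - j : ℕ) : ℝ) = (k : ℝ) - j := by
    push_cast [Nat.cast_sub hjk.le]; ring
  simp only [hcast]
  have hjR : (0:ℝ) < j := by exact_mod_cast hj
  have hkj : (j:ℝ) < k := by exact_mod_cast hjk
  have hnk : 2 * (k:ℝ) ≤ n := by exact_mod_cast hk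
  have hN : (0:ℝ) < n := by linarith
  have hNj : (0:ℝ) < (n:ℝ) - j := by linarith
  have hN0 : (n:ℝ) ≠ 0 := ne_of_gt hN
  have hNj0 : (n:ℝ) - j ≠ 0 := ne_of_gt hNj
  set a : ℝ := 2*j/n with ha
  set b : ℝ := 2*((k:ℝ)-j)/((n:ℝ)-j) with hb
  set c : ℝ := 2*k/n with hc
  have hapos : 0 < a := by positivity
  have hbpos : 0 < b := by apply div_pos <;> linarith
  have key : ∀ p : ℝ, (a * p + 1 - a) * (b * p + 1 - b) - (c * p + 1 - c)
      = a * b * (p - 1) * (p - 1/2) := by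
    intro p
    rw [ha, hb, hc]
    field_simp
    ring
  refine ⟨?_, ?_, ?_, ?_⟩
  · have := key (1/2); linarith
  · have := key 1; linarith
  · refine ⟨convex_univ, ?_⟩
    intro x _ y _ hxy s t hs ht hst
    simp only [smul_eq_mul]
    have h1 : 0 < (x - y)^2 := by
      have : x - y ≠ 0 := sub_ne_zero.mpr hxy
      positivity
    have ht' : t = 1 - s := by linarith
    subst ht'
    have k1 := key x
    have k2 := key y
    have k3 := key (s*x + (1-s)*y)
    nlinarith [mul_pos (mul_pos hapos hbpos) (mul_pos (mul_pos hs ht) h1)]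
  · intro p hp1 hp2
    have := key p
    have hpos : 0 < a * b * (1 - p) * (p - 1/2) :=
      mul_pos (mul_pos (mul_pos hapos hbpos) (by linarith)) (by linarith)
    nlinarith [hpos]
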